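/- arXiv:1905.02418 — 2 statements merged into one kernel-verified Lean document; each statement's English description precedes it below -/
import Mathlib

section
/- Let d ≥ 4 be an integer and (2,γ,δ) ∈ W_d. There exist (1,γ₁,δ₁), (1,γ₂,δ₂) ∈ W_d with γ₁ + γ₂ = γ and δ₁ + δ₂ = δ if and only if it is not the case that ρ ≠ 0 and (γ,δ) = (2k' + ⌊ρ/2⌋, ⌈ρ/2⌉ − ⌊ρ/2⌋), and it is not the case that d is odd and γ = 0. -/
/-! A point `(2, γ, δ)` splits exactly when some `3a + 2b` with `0 ≤ a ≤ γ`, `0 ≤ b ≤ δ` lies in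
`[3γ + 2δ - d, d]`. For `γ ≥ 1`, `δ ≥ 2` these sums fill `[2, 3γ + 2δ - 2]`, which always meets
that interval, so only `γ = 0` or `δ ≤ 1` can fail. There the interval is squeezed next to `d`
and the obstructions are parity (`γ = 0`, `δ = d` odd) and residues mod 3, which single out
the exceptional points `(2k' + ⌊ρ/2⌋, ⌈ρ/2⌉ - ⌊ρ/2⌋)`. -/

/-- `W_d`: triples `(r,γ,δ)` encoding the degree-`d` monomials invariant under the
action of the diagonal matrix `M(1,e,e²,e³)`. -/
def Wset (d : ℕ) : Set (ℤ × ℤ × ℤ) :=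
  {x | 0 ≤ x.1 ∧ x.1 ≤ 3 ∧ 0 ≤ x.2.1 ∧ 0 ≤ x.2.2 ∧
    0 ≤ x.2.2 + 2 * x.2.1 + (1 - x.1) * (d : ℤ) ∧ 2 * x.2.2 + 3 * x.2.1 ≤ x.1 * (d : ℤ)}

theorem mem_Wset_one_iff {d : ℕ} {γ δ : ℤ} :
    ((1 : ℤ), γ, δ) ∈ Wset d ↔ 0 ≤ γ ∧ 0 ≤ δ ∧ 3 * γ + 2 * δ ≤ d := by
  simp only [Wset, Set.mem_ofPred_eq]
  omega

theorem mem_Wset_two_iff {d : ℕ} {γ δ : ℤ} :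
    ((2 : ℤ), γ, δ) ∈ Wset d ↔ 0 ≤ γ ∧ 0 ≤ δ ∧ d ≤ 2 * γ + δ ∧ 3 * γ + 2 * δ ≤ 2 * d := by
  simp only [Wset, Set.mem_ofPred_eq]
  omega

theorem exists_split_iff (d : ℕ) (γ δ : ℤ) :
    (∃ γ₁ δ₁ γ₂ δ₂ : ℤ, ((1 : ℤ), γ₁, δ₁) ∈ Wset d ∧ ((1 : ℤ), γ₂, δ₂) ∈ Wset d ∧
        γ₁ + γ₂ = γ ∧ δ₁ + δ₂ = δ) ↔
      ∃ a b : ℤ, 0 ≤ a ∧ a ≤ γ ∧ 0 ≤ b ∧ b ≤ δ ∧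
        3 * γ + 2 * δ - d ≤ 3 * a + 2 * b ∧ 3 * a + 2 * b ≤ d := by
  simp only [mem_Wset_one_iff]
  constructor
  · rintro ⟨γ₁, δ₁, γ₂, δ₂, ⟨hγ₁, hδ₁, h₁⟩, ⟨hγ₂, hδ₂, h₂⟩, rfl, rfl⟩
    exact ⟨γ₁, δ₁, by omega, by omega, by omega, by omega, by omega, h₁⟩
  · rintro ⟨a, b, ha₀, ha, hb₀, hb, hlo, hhi⟩
    exact ⟨a, b, γ - a, δ - b, ⟨ha₀, hb₀, hhi⟩, ⟨by omega, by omega, by omega⟩, by ring, by ring⟩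

theorem exists_three_mul_add_two_mul_eq {γ δ S : ℤ} (hγ : 1 ≤ γ) (hδ : 2 ≤ δ) (hS₀ : 2 ≤ S)
    (hS : S ≤ 3 * γ + 2 * δ - 2) :
    ∃ a b : ℤ, 0 ≤ a ∧ a ≤ γ ∧ 0 ≤ b ∧ b ≤ δ ∧ 3 * a + 2 * b = S := by
  -- the least `a` with `S - 3a ≤ 2δ`, raised by one if needed to make `S - 3a` even
  set a := (max 0 (S - 2 * δ) + 2) / 3
  by_cases hpar : a % 2 = S % 2
  · exact ⟨a, (S - 3 * a) / 2, by omega, by omega, by omega, by omega, by omega⟩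
  · exact ⟨a + 1, (S - 3 * (a + 1)) / 2, by omega, by omega, by omega, by omega, by omega⟩

theorem exists_split_of_not_exceptional {d k' ρ : ℕ} (hkρ : d = 3 * k' + ρ) (hρ : ρ ≤ 2)
    {γ δ : ℤ} (hγ : 0 ≤ γ) (hδ : 0 ≤ δ) (hlo : d ≤ 2 * γ + δ) (hhi : 3 * γ + 2 * δ ≤ 2 * d)
    (hexc : ¬ (ρ ≠ 0 ∧ γ = 2 * (k' : ℤ) + ((ρ / 2 : ℕ) : ℤ) ∧
            δ = (((ρ + 1) / 2 : ℕ) : ℤ) - ((ρ / 2 : ℕ) : ℤ)))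
    (hodd : ¬ (Odd d ∧ γ = 0)) :
    ∃ a b : ℤ, 0 ≤ a ∧ a ≤ γ ∧ 0 ≤ b ∧ b ≤ δ ∧
        3 * γ + 2 * δ - d ≤ 3 * a + 2 * b ∧ 3 * a + 2 * b ≤ d := by
  rw [Nat.odd_iff] at hodd
  by_cases hsmall : 3 * γ + 2 * δ ≤ d
  · exact ⟨0, 0, by omega, hγ, by omega, hδ, by omega, by omega⟩
  by_cases hγ₀ : γ = 0
  · exact ⟨0, d / 2, by omega, by omega, by omega, by omega, by omega, by omega⟩
  by_cases hδ₁ : δ ≤ 1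
  · refine ⟨min γ k', 0, by omega, by omega, by omega, by omega, ?_, by omega⟩
    interval_cases ρ <;> omega
  obtain ⟨a, b, ha₀, ha, hb₀, hb, hab⟩ :=
    exists_three_mul_add_two_mul_eq (γ := γ) (δ := δ) (S := max 2 (3 * γ + 2 * δ - d))
      (by omega) (by omega) (by omega) (by omega)
  exact ⟨a, b, ha₀, ha, hb₀, hb, by omega, by omega⟩

theorem stmt13_general (d k' ρ : ℕ) (hkρ : d = 3 * k' + ρ) (hρ : ρ ≤ 2)
    (γ δ : ℤ) (hmem : ((2:ℤ), γ, δ) ∈ Wset d) :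
    (∃ γ₁ δ₁ γ₂ δ₂ : ℤ, ((1:ℤ), γ₁, δ₁) ∈ Wset d ∧ ((1:ℤ), γ₂, δ₂) ∈ Wset d ∧
        γ₁ + γ₂ = γ ∧ δ₁ + δ₂ = δ) ↔
      (¬ (ρ ≠ 0 ∧ γ = 2 * (k' : ℤ) + ((ρ / 2 : ℕ) : ℤ) ∧
            δ = (((ρ + 1) / 2 : ℕ) : ℤ) - ((ρ / 2 : ℕ) : ℤ)) ∧
       ¬ (Odd d ∧ γ = 0)) := by
  obtain ⟨hγ, hδ, hlo, hhi⟩ := mem_Wset_two_iff.1 hmem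
  rw [exists_split_iff]
  refine ⟨?_, fun ⟨hexc, hodd⟩ ↦ exists_split_of_not_exceptional hkρ hρ hγ hδ hlo hhi hexc hodd⟩
  rintro ⟨a, b, ha₀, ha, hb₀, hb, hSlo, hShi⟩
  refine ⟨?_, ?_⟩
  · rintro ⟨hρ₀, rfl, rfl⟩
    interval_cases ρ <;> omega
  · rintro ⟨hodd, rfl⟩
    rw [Nat.odd_iff] at hodd
    omega

/-- Write `d = 2k + ε` (`ε ∈ {0,1}`) and `d = 3k' + ρ` (`ρ ∈ {0,1,2}`). For
`(2,γ,δ) ∈ W_d`, there are `(1,γ₁,δ₁), (1,γ₂,δ₂) ∈ W_d` with `γ₁+γ₂ = γ` and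
`δ₁+δ₂ = δ` iff it is not the case that `ρ ≠ 0` and
`(γ,δ) = (2k' + ⌊ρ/2⌋, ⌈ρ/2⌉ − ⌊ρ/2⌋)`, and it is not the case that `d` is odd
and `γ = 0`. -/
theorem stmt13 (d k k' ε ρ : ℕ) (hd : 4 ≤ d)
    (hkε : d = 2 * k + ε) (hε : ε ≤ 1) (hkρ : d = 3 * k' + ρ) (hρ : ρ ≤ 2)
    (γ δ : ℤ) (hmem : ((2:ℤ), γ, δ) ∈ Wset d) :
    (∃ γ₁ δ₁ γ₂ δ₂ : ℤ, ((1:ℤ), γ₁, δ₁) ∈ Wset d ∧ ((1:ℤ), γ₂, δ₂) ∈ Wset d ∧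
        γ₁ + γ₂ = γ ∧ δ₁ + δ₂ = δ) ↔
      (¬ (ρ ≠ 0 ∧ γ = 2 * (k' : ℤ) + ((ρ / 2 : ℕ) : ℤ) ∧
            δ = (((ρ + 1) / 2 : ℕ) : ℤ) - ((ρ / 2 : ℕ) : ℤ)) ∧
       ¬ (Odd d ∧ γ = 0)) :=
  stmt13_general d k' ρ hkρ hρ γ δ hmem
end

section
/- Let d = 2k+1 ≥ 5 be an odd integer. Each of the following triples (a₁,a₂,a₃) of elements of W_d admits a non-trivial suitable 3-binomial, i.e. there exist b₁, b₂, b₃ ∈ W_d with b₁ + b₂ + b₃ = a₁ + a₂ + a₃ componentwise in ℤ³ and {b₁,b₂,b₃} ∩ {a₁,a₂,a₃} = ∅: (i) ((0,0,0), (2,0,d), (1,0,δ)) for every 0 ≤ δ ≤ k−1; (ii) ((0,0,0), (2,0,d), (3,d,0)); (iii) ((0,0,0), (1,0,0), (3,d,0)); (iv) ((1,0,0), (2,γ,d−2γ), (3,d,0)) for every 0 ≤ γ ≤ k−1. -/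
/-- The triple `(a₁,a₂,a₃)` of elements of `W_d` admits a non-trivial suitable
3-binomial: there are `b₁,b₂,b₃ ∈ W_d` with `b₁+b₂+b₃ = a₁+a₂+a₃` and
`{b₁,b₂,b₃} ∩ {a₁,a₂,a₃} = ∅`. -/
def AdmitsNT3 (d : ℕ) (a₁ a₂ a₃ : ℤ × ℤ × ℤ) : Prop :=
  ∃ b₁ b₂ b₃ : ℤ × ℤ × ℤ, b₁ ∈ Wset d ∧ b₂ ∈ Wset d ∧ b₃ ∈ Wset d ∧
    b₁ + b₂ + b₃ = a₁ + a₂ + a₃ ∧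
    ({b₁, b₂, b₃} : Set (ℤ × ℤ × ℤ)) ∩ {a₁, a₂, a₃} = ∅

/-! Each triple is matched by an explicit replacement triple, affine in `k` and in the
parameter `δ`, `γ`, or a floor of `k`; membership in `W_d`, the sum and disjointness are then
linear arithmetic. -/

@[simp]
theorem mem_Wset {d : ℕ} {r γ δ : ℤ} :
    (r, γ, δ) ∈ Wset d ↔ 0 ≤ r ∧ r ≤ 3 ∧ 0 ≤ γ ∧ 0 ≤ δ ∧
      0 ≤ δ + 2 * γ + (1 - r) * (d : ℤ) ∧ 2 * δ + 3 * γ ≤ r * (d : ℤ) :=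
  Iff.rfl

theorem AdmitsNT3.intro {d : ℕ} {a₁ a₂ a₃ b₁ b₂ b₃ : ℤ × ℤ × ℤ}
    (h₁ : b₁ ∈ Wset d) (h₂ : b₂ ∈ Wset d) (h₃ : b₃ ∈ Wset d)
    (hsum : b₁ + b₂ + b₃ = a₁ + a₂ + a₃)
    (hb₁ : b₁ ∉ ({a₁, a₂, a₃} : Set (ℤ × ℤ × ℤ)))
    (hb₂ : b₂ ∉ ({a₁, a₂, a₃} : Set (ℤ × ℤ × ℤ)))
    (hb₃ : b₃ ∉ ({a₁, a₂, a₃} : Set (ℤ × ℤ × ℤ))) :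
    AdmitsNT3 d a₁ a₂ a₃ := by
  refine ⟨b₁, b₂, b₃, h₁, h₂, h₃, hsum, Set.eq_empty_iff_forall_notMem.2 ?_⟩
  rintro b ⟨hb | hb | hb, ha⟩ <;> subst hb <;> contradiction

theorem admitsNT3_zero_two_one (k : ℕ) (δ : ℤ) (hδ₀ : 0 ≤ δ) (hδk : δ ≤ (k : ℤ) - 1) :
    AdmitsNT3 (2 * k + 1) (0, 0, 0) (2, 0, ((2 * k + 1 : ℕ) : ℤ)) (1, 0, δ) := by
  refine AdmitsNT3.intro (b₁ := (1, 0, k)) (b₂ := (1, 0, k)) (b₃ := (1, 0, δ + 1))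
    ?_ ?_ ?_ ?_ ?_ ?_ ?_ <;> simp [Prod.ext_iff] <;> omega

theorem admitsNT3_zero_two_three (k : ℕ) (hk : 2 ≤ k) :
    AdmitsNT3 (2 * k + 1) (0, 0, 0) (2, 0, ((2 * k + 1 : ℕ) : ℤ))
      (3, ((2 * k + 1 : ℕ) : ℤ), 0) := by
  -- The first two witnesses lie on the face `2δ + 3γ = 2d` of `W_d`; the choice
  -- `m = ⌊(k+1)/3⌋` keeps both of their `δ`-coordinates nonnegative.
  obtain ⟨m, hm⟩ : ∃ m : ℕ, m = (k + 1) / 3 := ⟨_, rfl⟩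
  refine AdmitsNT3.intro (b₁ := (2, 2 * m, 2 * k + 1 - 3 * m))
    (b₂ := (2, 2 * k - 2 * m, 3 * m - k + 1)) (b₃ := (1, 1, k - 1))
    ?_ ?_ ?_ ?_ ?_ ?_ ?_ <;> simp [Prod.ext_iff] <;> omega

theorem admitsNT3_zero_one_three (k : ℕ) (hk : 2 ≤ k) :
    AdmitsNT3 (2 * k + 1) (0, 0, 0) (1, 0, 0) (3, ((2 * k + 1 : ℕ) : ℤ), 0) := by
  obtain ⟨q, hq⟩ : ∃ q : ℕ, q = k / 2 := ⟨_, rfl⟩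
  refine AdmitsNT3.intro (b₁ := (2, k + 1, 0)) (b₂ := (1, k - q, 0)) (b₃ := (1, q, 0))
    ?_ ?_ ?_ ?_ ?_ ?_ ?_ <;> simp [Prod.ext_iff] <;> omega

theorem admitsNT3_one_two_three (k : ℕ) (γ : ℤ) (hγ₀ : 0 ≤ γ) (hγk : γ ≤ (k : ℤ) - 1) :
    AdmitsNT3 (2 * k + 1) (1, 0, 0) (2, γ, ((2 * k + 1 : ℕ) : ℤ) - 2 * γ)
      (3, ((2 * k + 1 : ℕ) : ℤ), 0) := by
  refine AdmitsNT3.intro (b₁ := (2, k, 1)) (b₂ := (2, k, 1))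
    (b₃ := (2, γ + 1, 2 * k - 2 * γ - 1)) ?_ ?_ ?_ ?_ ?_ ?_ ?_ <;> simp [Prod.ext_iff] <;> omega

/-- For odd `d = 2k+1 ≥ 5`, each of the triples
`((0,0,0),(2,0,d),(1,0,δ))` (`0 ≤ δ ≤ k−1`), `((0,0,0),(2,0,d),(3,d,0))`,
`((0,0,0),(1,0,0),(3,d,0))` and `((1,0,0),(2,γ,d−2γ),(3,d,0))` (`0 ≤ γ ≤ k−1`)
admits a non-trivial suitable 3-binomial. -/
theorem stmt17 (d k : ℕ) (hdk : d = 2 * k + 1) (hd : 5 ≤ d) :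
    (∀ δ : ℤ, 0 ≤ δ → δ ≤ (k:ℤ) - 1 →
      AdmitsNT3 d ((0:ℤ),0,0) ((2:ℤ),0,(d:ℤ)) ((1:ℤ),0,δ)) ∧
    AdmitsNT3 d ((0:ℤ),0,0) ((2:ℤ),0,(d:ℤ)) ((3:ℤ),(d:ℤ),0) ∧
    AdmitsNT3 d ((0:ℤ),0,0) ((1:ℤ),0,0) ((3:ℤ),(d:ℤ),0) ∧
    (∀ γ : ℤ, 0 ≤ γ → γ ≤ (k:ℤ) - 1 →
      AdmitsNT3 d ((1:ℤ),0,0) ((2:ℤ),γ,(d:ℤ) - 2 * γ) ((3:ℤ),(d:ℤ),0)) := by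
  subst hdk
  have hk : 2 ≤ k := by omega
  exact ⟨admitsNT3_zero_two_one k, admitsNT3_zero_two_three k hk,
    admitsNT3_zero_one_three k hk, admitsNT3_one_two_three k⟩
end
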